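/- arXiv:2604.20031 — 2 statements merged into one kernel-verified Lean document; each statement's English description precedes it below -/
import Mathlib

section
/- Set stability of support points under Hausdorff perturbations: let S₁, S₂ ⊆ ℝ^d be nonempty compact sets with Hausdorff distance δ = d_H(S₁, S₂), and suppose S₁ is ρ₁-strongly convex and S₂ is ρ₂-strongly convex. Then for every unit vector p ∈ ℝ^d, the (unique) maximizers x_{S₁}(p) of ⟨p, ·⟩ over S₁ and x_{S₂}(p) of ⟨p, ·⟩ over S₂ satisfy ‖x_{S₁}(p) − x_{S₂}(p)‖ ≤ δ + 2√(ρ_min · δ), where ρ_min = min{ρ₁, ρ₂}. -/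
/-!
If `x` maximizes `⟪p, ·⟫` over an intersection `S` of balls of radius `ρ`, then
`‖x - y‖² ≤ 2ρ ⟪p, x - y⟫` for every `y ∈ S`: the chord point `l x + (1 - l) y` can be pushed by
`ρ - √(ρ² - l (1 - l) ‖x - y‖²)` in the direction `p` without leaving any of the balls, and this
push cannot exceed the gap `(1 - l) ⟪p, x - y⟫`; let `l → 1`.

Take `y ∈ S₁` nearest to `x₂`, so `‖y - x₂‖ ≤ δ`. The support values of `S₁` and `S₂` in the
direction `p` differ by at most `δ`, hence `⟪p, x₁ - y⟫ ≤ 2δ` and `‖x₁ - y‖ ≤ 2√(ρ₁ δ)`; the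
triangle inequality gives the bound with `ρ₁`, and exchanging the sets gives it with `ρ₂`.
-/

open scoped RealInnerProductSpace

/-- A set is `ρ`-strongly convex if it is an intersection of closed balls of radius `ρ`. -/
def StronglyConvexSet {d : ℕ} (ρ : ℝ) (S : Set (EuclideanSpace ℝ (Fin d))) : Prop :=
  ∃ X : Set (EuclideanSpace ℝ (Fin d)), S = ⋂ x ∈ X, Metric.closedBall x ρ

open Metric Filter Topology

section InnerProductSpace

variable {E : Type*} [NormedAddCommGroup E] [InnerProductSpace ℝ E]

theorem norm_smul_add_one_sub_smul_sq (a b : E) (l : ℝ) :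
    ‖l • a + (1 - l) • b‖ ^ 2 =
      l * ‖a‖ ^ 2 + (1 - l) * ‖b‖ ^ 2 - l * (1 - l) * ‖a - b‖ ^ 2 := by
  rw [norm_add_sq_real, norm_sub_sq_real, norm_smul, norm_smul, mul_pow, mul_pow,
    Real.norm_eq_abs, Real.norm_eq_abs, sq_abs, sq_abs, real_inner_smul_left,
    real_inner_smul_right]
  ring

theorem add_smul_mem_closedBall {x y z u : E} {ρ l : ℝ}
    (hx : x ∈ closedBall z ρ) (hy : y ∈ closedBall z ρ) (hl₀ : 0 ≤ l) (hl₁ : l ≤ 1)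
    (hu : ‖u‖ = 1) :
    l • x + (1 - l) • y + (ρ - √(ρ ^ 2 - l * (1 - l) * ‖x - y‖ ^ 2)) • u ∈
      closedBall z ρ := by
  set s := √(ρ ^ 2 - l * (1 - l) * ‖x - y‖ ^ 2)
  rw [mem_closedBall, dist_eq_norm] at hx hy ⊢
  have hs : s ≤ ρ := (Real.sqrt_le_left ((norm_nonneg _).trans hx)).2 <| by
    nlinarith [sq_nonneg ‖x - y‖, mul_nonneg hl₀ (sub_nonneg.2 hl₁)]
  have hmid : ‖l • (x - z) + (1 - l) • (y - z)‖ ≤ s := by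
    refine Real.le_sqrt_of_sq_le ?_
    rw [norm_smul_add_one_sub_smul_sq, sub_sub_sub_cancel_right]
    have := pow_le_pow_left₀ (norm_nonneg _) hx 2
    have := pow_le_pow_left₀ (norm_nonneg _) hy 2
    nlinarith
  calc ‖l • x + (1 - l) • y + (ρ - s) • u - z‖
      = ‖(l • (x - z) + (1 - l) • (y - z)) + (ρ - s) • u‖ := by congr 1; module
    _ ≤ ‖l • (x - z) + (1 - l) • (y - z)‖ + ‖(ρ - s) • u‖ := norm_add_le _ _
    _ ≤ s + (ρ - s) := by
      rw [norm_smul, hu, mul_one, Real.norm_of_nonneg (sub_nonneg.2 hs)]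
      gcongr
    _ = ρ := by ring

theorem norm_sub_sq_le_of_forall_inner_le {X S : Set E} {ρ : ℝ}
    (hS : S = ⋂ z ∈ X, closedBall z ρ) {p x y : E} (hp : ‖p‖ = 1) (hx : x ∈ S)
    (hmax : ∀ w ∈ S, ⟪p, w⟫ ≤ ⟪p, x⟫) (hy : y ∈ S) :
    ‖x - y‖ ^ 2 ≤ 2 * ρ * ⟪p, x - y⟫ := by
  subst hS
  simp only [Set.mem_iInter₂] at hx hy
  obtain ⟨z, hz⟩ : X.Nonempty := by
    by_contra! hX
    have := hmax (x + p) (by simp [hX])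
    rw [inner_add_right, real_inner_self_eq_norm_sq, hp] at this
    linarith
  have hdiam : ‖x - y‖ ≤ 2 * ρ := by
    rw [← dist_eq_norm]
    linarith [dist_triangle_right x y z, mem_closedBall.1 (hx z hz), mem_closedBall.1 (hy z hz)]
  have hρ : 0 ≤ ρ := by linarith [norm_nonneg (x - y)]
  have hstep : ∀ l, 0 ≤ l → l < 1 → l * ‖x - y‖ ^ 2 ≤ 2 * ρ * ⟪p, x - y⟫ := by
    intro l hl₀ hl₁
    have hw := hmax _ <| Set.mem_iInter₂.2 fun z hz ↦
      add_smul_mem_closedBall (hx z hz) (hy z hz) hl₀ hl₁.le hp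
    rw [inner_add_right, inner_add_right, real_inner_smul_right, real_inner_smul_right,
      real_inner_smul_right, real_inner_self_eq_norm_sq, hp, one_pow, mul_one] at hw
    set μ := l * (1 - l) * ‖x - y‖ ^ 2
    set s := √(ρ ^ 2 - μ)
    have hμ₀ : 0 ≤ μ := by have := sub_nonneg.2 hl₁.le; positivity
    have hμ : μ ≤ ρ ^ 2 := by
      nlinarith [sq_nonneg (2 * l - 1), pow_le_pow_left₀ (norm_nonneg _) hdiam 2]
    have hs₀ : 0 ≤ s := Real.sqrt_nonneg _
    have hs : s ^ 2 = ρ ^ 2 - μ := Real.sq_sqrt (sub_nonneg.2 hμ)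
    have hsρ : s ≤ ρ := by nlinarith
    -- `hw` says `ρ - s ≤ (1 - l) ⟪p, x - y⟫`, while `2ρ (ρ - s) ≥ ρ² - s² = μ`
    have : (1 - l) * (l * ‖x - y‖ ^ 2) ≤ (1 - l) * (2 * ρ * ⟪p, x - y⟫) := by
      rw [inner_sub_right]
      nlinarith
    exact le_of_mul_le_mul_left this (by linarith)
  have hlim : Tendsto (fun l : ℝ ↦ l * ‖x - y‖ ^ 2) (𝓝[<] 1) (𝓝 (‖x - y‖ ^ 2)) :=
    ((continuous_mul_const _).tendsto' 1 _ (one_mul _)).mono_left nhdsWithin_le_nhds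
  exact le_of_tendsto hlim <| by
    filter_upwards [Ioo_mem_nhdsLT one_pos] with l hl using hstep l hl.1.le hl.2

theorem inner_sub_inner_le_dist {p : E} (hp : ‖p‖ ≤ 1) (x y : E) :
    ⟪p, x⟫ - ⟪p, y⟫ ≤ dist x y := calc
  ⟪p, x⟫ - ⟪p, y⟫ = ⟪p, x - y⟫ := (inner_sub_right _ _ _).symm
  _ ≤ ‖p‖ * ‖x - y‖ := real_inner_le_norm _ _
  _ ≤ dist x y := by rw [dist_eq_norm]; exact mul_le_of_le_one_left (norm_nonneg _) hp

theorem inner_sub_inner_le_hausdorffDist {s t : Set E} {p x y : E} (hp : ‖p‖ ≤ 1)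
    (hx : x ∈ s) (hy : y ∈ t) (hmax : ∀ w ∈ t, ⟪p, w⟫ ≤ ⟪p, y⟫)
    (hfin : hausdorffEDist s t ≠ ⊤) :
    ⟪p, x⟫ - ⟪p, y⟫ ≤ hausdorffDist s t := by
  refine ((le_infDist ⟨y, hy⟩).2 fun w hw ↦ ?_).trans (infDist_le_hausdorffDist_of_mem hx hfin)
  linarith [hmax w hw, inner_sub_inner_le_dist hp x w]

theorem norm_sub_le_hausdorffDist_add_sqrt {X S T : Set E} {ρ : ℝ}
    (hS : S = ⋂ z ∈ X, closedBall z ρ) (hρ : 0 ≤ ρ) (hSc : IsCompact S) (hTc : IsCompact T)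
    {p x y : E} (hp : ‖p‖ = 1) (hx : x ∈ S) (hxmax : ∀ w ∈ S, ⟪p, w⟫ ≤ ⟪p, x⟫)
    (hy : y ∈ T) (hymax : ∀ w ∈ T, ⟪p, w⟫ ≤ ⟪p, y⟫) :
    ‖x - y‖ ≤ hausdorffDist S T + 2 * √(ρ * hausdorffDist S T) := by
  set δ := hausdorffDist S T
  have hδ : 0 ≤ δ := hausdorffDist_nonneg
  have hfin : hausdorffEDist S T ≠ ⊤ :=
    hausdorffEDist_ne_top_of_nonempty_of_bounded ⟨x, hx⟩ ⟨y, hy⟩ hSc.isBounded hTc.isBounded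
  obtain ⟨x', hx', hyx'⟩ := hSc.exists_infDist_eq_dist ⟨x, hx⟩ y
  have hyx'δ : dist y x' ≤ δ := by
    rw [← hyx']
    exact (infDist_le_hausdorffDist_of_mem hy (by rwa [hausdorffEDist_comm])).trans_eq
      hausdorffDist_comm
  have hxx' : ‖x - x'‖ ≤ 2 * √(ρ * δ) := by
    have hkey := norm_sub_sq_le_of_forall_inner_le hS hp hx hxmax hx'
    have hxy := inner_sub_inner_le_hausdorffDist hp.le hx hy hymax hfin
    have hyx'_inner := inner_sub_inner_le_dist hp.le y x'
    rw [inner_sub_right] at hkey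
    refine (pow_le_pow_iff_left₀ (norm_nonneg _) (by positivity) two_ne_zero).1 ?_
    rw [mul_pow, Real.sq_sqrt (by positivity)]
    nlinarith
  calc ‖x - y‖ ≤ ‖x - x'‖ + ‖x' - y‖ := norm_sub_le_norm_sub_add_norm_sub _ _ _
    _ ≤ 2 * √(ρ * δ) + δ := add_le_add hxx' (by rwa [← dist_eq_norm, dist_comm])
    _ = δ + 2 * √(ρ * δ) := add_comm _ _

end InnerProductSpace

theorem support_point_set_stability_general {d : ℕ}
    (S₁ S₂ : Set (EuclideanSpace ℝ (Fin d)))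
    (hcomp₁ : IsCompact S₁) (hcomp₂ : IsCompact S₂)
    (ρ₁ ρ₂ : ℝ) (hρ₁ : 0 < ρ₁) (hρ₂ : 0 < ρ₂)
    (hsc₁ : StronglyConvexSet ρ₁ S₁) (hsc₂ : StronglyConvexSet ρ₂ S₂)
    (p : EuclideanSpace ℝ (Fin d)) (hp : ‖p‖ = 1)
    (x₁ : EuclideanSpace ℝ (Fin d)) (hx₁mem : x₁ ∈ S₁)
    (hx₁max : ∀ x ∈ S₁, ⟪p, x⟫ ≤ ⟪p, x₁⟫)
    (x₂ : EuclideanSpace ℝ (Fin d)) (hx₂mem : x₂ ∈ S₂)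
    (hx₂max : ∀ x ∈ S₂, ⟪p, x⟫ ≤ ⟪p, x₂⟫) :
    ‖x₁ - x₂‖ ≤ Metric.hausdorffDist S₁ S₂ +
      2 * Real.sqrt (min ρ₁ ρ₂ * Metric.hausdorffDist S₁ S₂) := by
  obtain ⟨X₁, hX₁⟩ := hsc₁
  obtain ⟨X₂, hX₂⟩ := hsc₂
  rcases le_total ρ₁ ρ₂ with hle | hle
  · rw [min_eq_left hle]
    exact norm_sub_le_hausdorffDist_add_sqrt hX₁ hρ₁.le hcomp₁ hcomp₂ hp hx₁mem hx₁max
      hx₂mem hx₂max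
  · rw [min_eq_right hle, norm_sub_rev, hausdorffDist_comm]
    exact norm_sub_le_hausdorffDist_add_sqrt hX₂ hρ₂.le hcomp₂ hcomp₁ hp hx₂mem hx₂max
      hx₁mem hx₁max

/-- **Set stability of support points under Hausdorff perturbations.**
For nonempty compact strongly convex sets `S₁` (`ρ₁`) and `S₂` (`ρ₂`) with Hausdorff
distance `δ`, and a unit direction `p`, any maximizers `x₁` of `⟨p, ·⟩` over `S₁` and
`x₂` over `S₂` satisfy `‖x₁ − x₂‖ ≤ δ + 2√(ρ_min δ)`. -/
theorem support_point_set_stability {d : ℕ}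
    (S₁ S₂ : Set (EuclideanSpace ℝ (Fin d)))
    (hne₁ : S₁.Nonempty) (hne₂ : S₂.Nonempty)
    (hcomp₁ : IsCompact S₁) (hcomp₂ : IsCompact S₂)
    (ρ₁ ρ₂ : ℝ) (hρ₁ : 0 < ρ₁) (hρ₂ : 0 < ρ₂)
    (hsc₁ : StronglyConvexSet ρ₁ S₁) (hsc₂ : StronglyConvexSet ρ₂ S₂)
    (p : EuclideanSpace ℝ (Fin d)) (hp : ‖p‖ = 1)
    (x₁ : EuclideanSpace ℝ (Fin d)) (hx₁mem : x₁ ∈ S₁)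
    (hx₁max : ∀ x ∈ S₁, ⟪p, x⟫ ≤ ⟪p, x₁⟫)
    (x₂ : EuclideanSpace ℝ (Fin d)) (hx₂mem : x₂ ∈ S₂)
    (hx₂max : ∀ x ∈ S₂, ⟪p, x⟫ ≤ ⟪p, x₂⟫) :
    ‖x₁ - x₂‖ ≤ Metric.hausdorffDist S₁ S₂ +
      2 * Real.sqrt (min ρ₁ ρ₂ * Metric.hausdorffDist S₁ S₂) :=
  support_point_set_stability_general S₁ S₂ hcomp₁ hcomp₂ ρ₁ ρ₂ hρ₁ hρ₂ hsc₁ hsc₂ p hp x₁ hx₁mem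
    hx₁max x₂ hx₂mem hx₂max
end

section
/- Strongly convex refinement of the SPO+ discrepancy bound: let S_ref, S_cl ⊆ ℝ^d be nonempty compact sets, with S_ref being ρ_ref-strongly convex and S_cl being ρ_cl-strongly convex, ρ_min = min{ρ_ref, ρ_cl}, and let c_ref, c_cl ∈ ℝ^d be nonzero and ĉ ∈ ℝ^d. Let w⋆_ref, w⋆_cl be the minimizers of ⟨c_ref, ·⟩ over S_ref and ⟨c_cl, ·⟩ over S_cl respectively. Define c_d = ‖c_ref − c_cl‖, δ_N = inf_{v∈ℝ^d} d_H(S_ref, S_cl + v), D_ref = D(S_ref), D_cl = D(S_cl), T = min{ D_ref·c_d + δ_N(‖c_cl − 2ĉ‖ + ‖c_cl‖), D_cl·c_d + δ_N(‖c_ref − 2ĉ‖ + ‖c_ref‖) }, and B_SC(ĉ) = 2‖ĉ‖ · (ρ_min · ‖c_ref/‖c_ref‖ − c_cl/‖c_cl‖‖ + δ_N + 2√(ρ_min · δ_N)). Then |ℓ_{S_ref}(ĉ, c_ref) − ℓ_{S_cl}(ĉ, c_cl)| ≤ B_SC(ĉ) + T. -/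
open scoped RealInnerProductSpace

/-- Support function of a set `S ⊆ ℝ^d`. -/
noncomputable def supp {d : ℕ} (S : Set (EuclideanSpace ℝ (Fin d)))
    (u : EuclideanSpace ℝ (Fin d)) : ℝ :=
  sSup ((fun w => ⟪u, w⟫) '' S)

/-- Optimal value of the linear program over `S`. -/
noncomputable def zstar {d : ℕ} (S : Set (EuclideanSpace ℝ (Fin d)))
    (c : EuclideanSpace ℝ (Fin d)) : ℝ :=
  sInf ((fun w => ⟪c, w⟫) '' S)

/-- SPO+ loss with a chosen minimizer `w⋆` of `⟨c, ·⟩` over `S`. -/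
noncomputable def spoPlus {d : ℕ} (S : Set (EuclideanSpace ℝ (Fin d)))
    (chat c wstar : EuclideanSpace ℝ (Fin d)) : ℝ :=
  supp S (c - (2 : ℝ) • chat) + 2 * ⟪chat, wstar⟫ - zstar S c

/-- The translate `S + v = {w + v : w ∈ S}`. -/
def setTranslate {d : ℕ} (S : Set (EuclideanSpace ℝ (Fin d)))
    (v : EuclideanSpace ℝ (Fin d)) : Set (EuclideanSpace ℝ (Fin d)) :=
  (fun w => w + v) '' S

/-- Translation-invariant shape distance `δ_N = inf_v d_H(S₁, S₂ + v)`. -/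
noncomputable def shapeDist {d : ℕ}
    (S₁ S₂ : Set (EuclideanSpace ℝ (Fin d))) : ℝ :=
  ⨅ v : EuclideanSpace ℝ (Fin d), Metric.hausdorffDist S₁ (setTranslate S₂ v)

/-!
Write `ℓ_S(ĉ, c) = (ξ_S(c - 2ĉ) - z⋆_S(c)) + 2⟨ĉ, w⋆⟩`. The bracket changes by at most
`D(S) ‖c - c'‖` when only `c` moves and by at most `d_H(S, S') (‖c - 2ĉ‖ + ‖c‖)` when only the
set moves; passing through `(S_ref, c_cl)` or through `(S_cl, c_ref)` gives the two terms of `T`.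
The second part differs by at most `2 ‖ĉ‖ ‖w⋆_ref - w⋆_cl‖`, and strong convexity controls the
minimizers: a `ρ`-strongly convex set lies in the ball of radius `ρ` tangent to it at the minimizer
`w` of `⟨u, ·⟩`, i.e. `‖s - w‖² ≤ 2ρ ⟨u, s - w⟩` for unit `u`. Hence minimizers are `ρ`-Lipschitz
in the normalized cost, and move by at most `δ + 2 √(ρ δ)` under a Hausdorff perturbation of size
`δ`. All quantities are invariant under translating `S_cl`, so `δ` may be replaced by
`d_H(S_ref, S_cl + v)` for any `v`, and the infimum over `v` is reached by continuity.
-/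

open Metric Set Filter Topology

lemma le_of_forall_gt_of_continuousAt {f : ℝ → ℝ} {a b : ℝ} (hf : ContinuousAt f a)
    (h : ∀ t > a, b ≤ f t) : b ≤ f a :=
  ge_of_tendsto (hf.tendsto.mono_left nhdsWithin_le_nhds)
    (eventually_nhdsWithin_of_forall (s := Ioi a) h)

lemma exists_norm_sub_le_of_hausdorffDist_le {E : Type*} [SeminormedAddCommGroup E]
    {S₁ S₂ : Set E} (hS₁ : Bornology.IsBounded S₁)
    (hS₂ : IsCompact S₂) (hne₂ : S₂.Nonempty) {a : E} (ha : a ∈ S₁) {t : ℝ}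
    (hd : hausdorffDist S₁ S₂ ≤ t) : ∃ b ∈ S₂, ‖a - b‖ ≤ t := by
  obtain ⟨b, hb, hab⟩ := hS₂.exists_infDist_eq_dist hne₂ a
  refine ⟨b, hb, ?_⟩
  rw [← dist_eq_norm, ← hab]
  exact (infDist_le_hausdorffDist_of_mem ha (hausdorffEDist_ne_top_of_nonempty_of_bounded
    ⟨a, ha⟩ hne₂ hS₁ hS₂.isBounded)).trans hd

section InnerProductSpace

variable {F : Type*} [NormedAddCommGroup F] [InnerProductSpace ℝ F]

lemma real_inner_le_inner_add_norm_mul_norm_sub (u a b : F) :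
    ⟪u, a⟫ ≤ ⟪u, b⟫ + ‖u‖ * ‖a - b‖ := by
  have h := real_inner_le_norm u (a - b)
  rw [inner_sub_right] at h
  linarith

lemma norm_add_smul_sub_sq (a b : F) (θ : ℝ) :
    ‖a + θ • (b - a)‖ ^ 2 =
      (1 - θ) * ‖a‖ ^ 2 + θ * ‖b‖ ^ 2 - θ * (1 - θ) * ‖b - a‖ ^ 2 := by
  obtain ⟨e, rfl⟩ : ∃ e, b = a + e := ⟨b - a, by abel⟩
  simp only [add_sub_cancel_left, norm_add_sq_real, norm_smul, inner_smul_right,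
    Real.norm_eq_abs, mul_pow, sq_abs]
  ring

lemma IsMinOn.inner_smul {S : Set F} {c w : F} (h : IsMinOn (fun x => ⟪c, x⟫) S w) {a : ℝ}
    (ha : 0 ≤ a) : IsMinOn (fun x => ⟪a • c, x⟫) S w :=
  isMinOn_iff.2 fun x hx => by
    simpa only [real_inner_smul_left] using mul_le_mul_of_nonneg_left (h hx) ha

lemma inner_add_le_of_closedBall_subset {S : Set F} {u w m : F} {r : ℝ} (hu : ‖u‖ = 1)
    (hr : 0 ≤ r) (hmin : IsMinOn (fun x => ⟪u, x⟫) S w) (hball : closedBall m r ⊆ S) :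
    ⟪u, w⟫ + r ≤ ⟪u, m⟫ := by
  have hmem : m - r • u ∈ S := hball <| by
    rw [mem_closedBall, dist_eq_norm, sub_sub_cancel_left, norm_neg, norm_smul, hu, mul_one,
      Real.norm_of_nonneg hr]
  have h : ⟪u, w⟫ ≤ ⟪u, m - r • u⟫ := hmin hmem
  rw [inner_sub_right, real_inner_smul_right, real_inner_self_eq_norm_sq, hu] at h
  linarith

end InnerProductSpace

section

variable {d : ℕ}

namespace StronglyConvexSet

variable {ρ : ℝ} {S S₁ S₂ : Set (EuclideanSpace ℝ (Fin d))}

theorem closedBall_subset (hsc : StronglyConvexSet ρ S) (hρ : 0 < ρ)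
    {w s : EuclideanSpace ℝ (Fin d)} (hw : w ∈ S) (hs : s ∈ S) {θ : ℝ} (hθ₀ : 0 ≤ θ)
    (hθ₁ : θ ≤ 1) :
    closedBall (w + θ • (s - w)) (θ * (1 - θ) * ‖s - w‖ ^ 2 / (2 * ρ)) ⊆ S := by
  obtain ⟨X, rfl⟩ := hsc
  simp only [subset_def, mem_iInter₂, mem_closedBall, dist_eq_norm] at hw hs ⊢
  intro z hz x hx
  set r := θ * (1 - θ) * ‖s - w‖ ^ 2 / (2 * ρ)
  have hr : 2 * ρ * r = θ * (1 - θ) * ‖s - w‖ ^ 2 := by simp only [r]; field_simp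
  have hmid : ‖w + θ • (s - w) - x‖ ^ 2 ≤ ρ ^ 2 - 2 * ρ * r := by
    have e : w + θ • (s - w) - x = (w - x) + θ • ((s - x) - (w - x)) := by module
    rw [e, norm_add_smul_sub_sq, sub_sub_sub_cancel_right, hr]
    have := pow_le_pow_left₀ (norm_nonneg _) (hw x hx) 2
    have := pow_le_pow_left₀ (norm_nonneg _) (hs x hx) 2
    nlinarith
  have hρr : 0 ≤ ρ - r := by nlinarith [sq_nonneg ‖w + θ • (s - w) - x‖]
  have hmid' : ‖w + θ • (s - w) - x‖ ≤ ρ - r :=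
    (pow_le_pow_iff_left₀ (norm_nonneg _) hρr two_ne_zero).1 (by nlinarith [sq_nonneg r])
  calc ‖z - x‖ ≤ ‖z - (w + θ • (s - w))‖ + ‖w + θ • (s - w) - x‖ :=
        norm_sub_le_norm_sub_add_norm_sub _ _ _
    _ ≤ ρ := by linarith [hz]

theorem sq_norm_sub_le_inner (hsc : StronglyConvexSet ρ S) (hρ : 0 < ρ)
    {u w s : EuclideanSpace ℝ (Fin d)} (hu : ‖u‖ = 1) (hw : w ∈ S)
    (hmin : IsMinOn (fun x => ⟪u, x⟫) S w) (hs : s ∈ S) :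
    ‖s - w‖ ^ 2 ≤ 2 * ρ * ⟪u, s - w⟫ := by
  have key : ∀ θ ∈ Ioo (0 : ℝ) 1, (1 - θ) * ‖s - w‖ ^ 2 ≤ 2 * ρ * ⟪u, s - w⟫ := by
    rintro θ ⟨hθ₀, hθ₁⟩
    have h := inner_add_le_of_closedBall_subset hu (by have := hθ₁.le; positivity) hmin
      (hsc.closedBall_subset hρ hw hs hθ₀.le hθ₁.le)
    rw [inner_add_right, real_inner_smul_right, add_le_add_iff_left,
      div_le_iff₀ (by positivity)] at h
    exact le_of_mul_le_mul_left (by linarith) hθ₀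
  have hlim : Tendsto (fun θ : ℝ => (1 - θ) * ‖s - w‖ ^ 2) (𝓝[>] 0) (𝓝 (‖s - w‖ ^ 2)) := by
    simpa using ((by fun_prop : Continuous fun θ : ℝ => (1 - θ) * ‖s - w‖ ^ 2).tendsto 0).mono_left
      nhdsWithin_le_nhds
  exact le_of_tendsto hlim (mem_of_superset (Ioo_mem_nhdsGT one_pos) key)

theorem norm_sub_le_mul_norm_sub (hsc : StronglyConvexSet ρ S) (hρ : 0 < ρ)
    {u u' w w' : EuclideanSpace ℝ (Fin d)} (hu : ‖u‖ = 1) (hu' : ‖u'‖ = 1) (hw : w ∈ S)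
    (hmin : IsMinOn (fun x => ⟪u, x⟫) S w) (hw' : w' ∈ S)
    (hmin' : IsMinOn (fun x => ⟪u', x⟫) S w') :
    ‖w - w'‖ ≤ ρ * ‖u - u'‖ := by
  have h₁ := hsc.sq_norm_sub_le_inner hρ hu hw hmin hw'
  have h₂ := hsc.sq_norm_sub_le_inner hρ hu' hw' hmin' hw
  have hcs := real_inner_le_norm (u - u') (w' - w)
  rw [norm_sub_rev w'] at h₁ hcs
  rw [← neg_sub w' w, inner_neg_right, norm_neg, norm_sub_rev w'] at h₂
  rw [inner_sub_left] at hcs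
  have h := mul_le_mul_of_nonneg_left hcs hρ.le
  nlinarith [mul_nonneg hρ.le (norm_nonneg (u - u'))]

theorem norm_sub_le_of_hausdorffDist_le (hsc : StronglyConvexSet ρ S₁) (hρ : 0 < ρ)
    (hS₁ : IsCompact S₁) (hS₂ : IsCompact S₂) {u w₁ w₂ : EuclideanSpace ℝ (Fin d)}
    (hu : ‖u‖ = 1) (hw₁ : w₁ ∈ S₁) (hmin₁ : IsMinOn (fun x => ⟪u, x⟫) S₁ w₁) (hw₂ : w₂ ∈ S₂)
    (hmin₂ : IsMinOn (fun x => ⟪u, x⟫) S₂ w₂) {t : ℝ} (hd : hausdorffDist S₁ S₂ ≤ t) :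
    ‖w₁ - w₂‖ ≤ t + 2 * √(ρ * t) := by
  obtain ⟨p, hp, hpw⟩ := exists_norm_sub_le_of_hausdorffDist_le hS₂.isBounded hS₁ ⟨w₁, hw₁⟩ hw₂
    (hausdorffDist_comm.trans_le hd)
  obtain ⟨q, hq, hqw⟩ := exists_norm_sub_le_of_hausdorffDist_le hS₁.isBounded hS₂ ⟨w₂, hw₂⟩ hw₁ hd
  have hp' := real_inner_le_inner_add_norm_mul_norm_sub u p w₂
  have hq' := real_inner_le_inner_add_norm_mul_norm_sub u q w₁
  have hwq : ⟪u, w₂⟫ ≤ ⟪u, q⟫ := hmin₂ hq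
  rw [hu, one_mul, norm_sub_rev] at hp' hq'
  have hgrowth := hsc.sq_norm_sub_le_inner hρ hu hw₁ hmin₁ hp
  rw [inner_sub_right] at hgrowth
  have hρt : 0 ≤ ρ * t := mul_nonneg hρ.le (hausdorffDist_nonneg.trans hd)
  have hpw₁ : ‖w₁ - p‖ ≤ 2 * √(ρ * t) := by
    refine (pow_le_pow_iff_left₀ (norm_nonneg _) (by positivity) two_ne_zero).1 ?_
    rw [mul_pow, Real.sq_sqrt hρt, norm_sub_rev]
    nlinarith
  calc ‖w₁ - w₂‖ ≤ ‖w₁ - p‖ + ‖p - w₂‖ := norm_sub_le_norm_sub_add_norm_sub _ _ _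
    _ ≤ t + 2 * √(ρ * t) := by rw [norm_sub_rev p]; linarith

theorem norm_sub_le_of_isMinOn (hsc : StronglyConvexSet ρ S₁) (hρ : 0 < ρ)
    (hS₁ : IsCompact S₁) (hS₂ : IsCompact S₂) {c₁ c₂ w₁ w₂ : EuclideanSpace ℝ (Fin d)}
    (hc₁ : c₁ ≠ 0) (hc₂ : c₂ ≠ 0) (hw₁ : w₁ ∈ S₁) (hmin₁ : IsMinOn (fun x => ⟪c₁, x⟫) S₁ w₁)
    (hw₂ : w₂ ∈ S₂) (hmin₂ : IsMinOn (fun x => ⟪c₂, x⟫) S₂ w₂) {t : ℝ}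
    (hd : hausdorffDist S₁ S₂ ≤ t) :
    ‖w₁ - w₂‖ ≤ ρ * ‖‖c₁‖⁻¹ • c₁ - ‖c₂‖⁻¹ • c₂‖ + t + 2 * √(ρ * t) := by
  obtain ⟨w, hw, hmin⟩ := hS₁.exists_isMinOn ⟨w₁, hw₁⟩
    (by fun_prop : Continuous fun x : EuclideanSpace ℝ (Fin d) => ⟪‖c₂‖⁻¹ • c₂, x⟫).continuousOn
  have hu₁ := norm_smul_inv_norm (𝕜 := ℝ) hc₁
  have hu₂ := norm_smul_inv_norm (𝕜 := ℝ) hc₂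
  calc ‖w₁ - w₂‖ ≤ ‖w₁ - w‖ + ‖w - w₂‖ := norm_sub_le_norm_sub_add_norm_sub _ _ _
    _ ≤ ρ * ‖‖c₁‖⁻¹ • c₁ - ‖c₂‖⁻¹ • c₂‖ + (t + 2 * √(ρ * t)) := add_le_add
        (hsc.norm_sub_le_mul_norm_sub hρ hu₁ hu₂ hw₁ (hmin₁.inner_smul (by positivity)) hw hmin)
        (hsc.norm_sub_le_of_hausdorffDist_le hρ hS₁ hS₂ hu₂ hw hmin hw₂
          (hmin₂.inner_smul (by positivity)) hd)
    _ = _ := by ring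

end StronglyConvexSet

theorem norm_sub_le_min_of_isMinOn {ρ₁ ρ₂ : ℝ} {S₁ S₂ : Set (EuclideanSpace ℝ (Fin d))}
    (hsc₁ : StronglyConvexSet ρ₁ S₁) (hsc₂ : StronglyConvexSet ρ₂ S₂) (hρ₁ : 0 < ρ₁)
    (hρ₂ : 0 < ρ₂) (hS₁ : IsCompact S₁) (hS₂ : IsCompact S₂)
    {c₁ c₂ w₁ w₂ : EuclideanSpace ℝ (Fin d)} (hc₁ : c₁ ≠ 0) (hc₂ : c₂ ≠ 0) (hw₁ : w₁ ∈ S₁)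
    (hmin₁ : IsMinOn (fun x => ⟪c₁, x⟫) S₁ w₁) (hw₂ : w₂ ∈ S₂)
    (hmin₂ : IsMinOn (fun x => ⟪c₂, x⟫) S₂ w₂) {t : ℝ} (hd : hausdorffDist S₁ S₂ ≤ t) :
    ‖w₁ - w₂‖ ≤
      min ρ₁ ρ₂ * ‖‖c₁‖⁻¹ • c₁ - ‖c₂‖⁻¹ • c₂‖ + t + 2 * √(min ρ₁ ρ₂ * t) := by
  rcases le_total ρ₁ ρ₂ with h | h
  · rw [min_eq_left h]
    exact hsc₁.norm_sub_le_of_isMinOn hρ₁ hS₁ hS₂ hc₁ hc₂ hw₁ hmin₁ hw₂ hmin₂ hd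
  · rw [min_eq_right h, norm_sub_rev w₁, norm_sub_rev (‖c₁‖⁻¹ • c₁)]
    exact hsc₂.norm_sub_le_of_isMinOn hρ₂ hS₂ hS₁ hc₂ hc₁ hw₂ hmin₂ hw₁ hmin₁
      (hausdorffDist_comm.trans_le hd)

section SupportFunction

variable {S S₁ S₂ : Set (EuclideanSpace ℝ (Fin d))}

lemma exists_inner_eq_supp (hS : IsCompact S) (hne : S.Nonempty) (u : EuclideanSpace ℝ (Fin d)) :
    ∃ m ∈ S, ⟪u, m⟫ = supp S u :=
  (hS.image (continuous_const.inner continuous_id)).sSup_mem (hne.image _)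

lemma inner_le_supp (hS : IsCompact S) {w : EuclideanSpace ℝ (Fin d)} (hw : w ∈ S)
    (u : EuclideanSpace ℝ (Fin d)) : ⟪u, w⟫ ≤ supp S u :=
  le_csSup (hS.image (continuous_const.inner continuous_id)).bddAbove (mem_image_of_mem _ hw)

lemma zstar_eq_neg_supp_neg (S : Set (EuclideanSpace ℝ (Fin d))) (c : EuclideanSpace ℝ (Fin d)) :
    zstar S c = -supp S (-c) := by
  rw [zstar, supp, Real.sInf_def]
  congr 2
  ext x
  simp [inner_neg_left, neg_eq_iff_eq_neg]

lemma supp_le_supp_add (hS₁ : IsCompact S₁) (hS₂ : IsCompact S₂) (hne₁ : S₁.Nonempty)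
    (hne₂ : S₂.Nonempty) {t : ℝ} (hd : hausdorffDist S₁ S₂ ≤ t) (u : EuclideanSpace ℝ (Fin d)) :
    supp S₁ u ≤ supp S₂ u + t * ‖u‖ := by
  obtain ⟨m, hm, hmu⟩ := exists_inner_eq_supp hS₁ hne₁ u
  obtain ⟨b, hb, hmb⟩ := exists_norm_sub_le_of_hausdorffDist_le hS₁.isBounded hS₂ hne₂ hm hd
  calc supp S₁ u = ⟪u, m⟫ := hmu.symm
    _ ≤ ⟪u, b⟫ + ‖u‖ * ‖m - b‖ := real_inner_le_inner_add_norm_mul_norm_sub u m b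
    _ ≤ supp S₂ u + t * ‖u‖ := by
        rw [mul_comm t]
        gcongr
        exact inner_le_supp hS₂ hb u

lemma abs_supp_sub_supp_le (hS₁ : IsCompact S₁) (hS₂ : IsCompact S₂) (hne₁ : S₁.Nonempty)
    (hne₂ : S₂.Nonempty) {t : ℝ} (hd : hausdorffDist S₁ S₂ ≤ t) (u : EuclideanSpace ℝ (Fin d)) :
    |supp S₁ u - supp S₂ u| ≤ t * ‖u‖ := by
  have h₁₂ := supp_le_supp_add hS₁ hS₂ hne₁ hne₂ hd u
  have h₂₁ := supp_le_supp_add hS₂ hS₁ hne₂ hne₁ (hausdorffDist_comm.trans_le hd) u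
  exact abs_sub_le_iff.2 ⟨by linarith, by linarith⟩

lemma abs_supp_sub_zstar_sub_le_hausdorffDist (hS₁ : IsCompact S₁) (hS₂ : IsCompact S₂)
    (hne₁ : S₁.Nonempty) (hne₂ : S₂.Nonempty) {t : ℝ} (hd : hausdorffDist S₁ S₂ ≤ t)
    (u c : EuclideanSpace ℝ (Fin d)) :
    |(supp S₁ u - zstar S₁ c) - (supp S₂ u - zstar S₂ c)| ≤ t * (‖u‖ + ‖c‖) := by
  have hu := abs_supp_sub_supp_le hS₁ hS₂ hne₁ hne₂ hd u
  have hc := abs_supp_sub_supp_le hS₁ hS₂ hne₁ hne₂ hd (-c)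
  rw [norm_neg] at hc
  calc |(supp S₁ u - zstar S₁ c) - (supp S₂ u - zstar S₂ c)|
      = |(supp S₁ u - supp S₂ u) + (supp S₁ (-c) - supp S₂ (-c))| := by
        rw [zstar_eq_neg_supp_neg, zstar_eq_neg_supp_neg]
        congr 1
        ring
    _ ≤ t * ‖u‖ + t * ‖c‖ := (abs_add_le _ _).trans (add_le_add hu hc)
    _ = t * (‖u‖ + ‖c‖) := by ring

lemma supp_sub_zstar_sub_le_diam (hS : IsCompact S) (hne : S.Nonempty)
    {u u' c c' : EuclideanSpace ℝ (Fin d)} (h : u - u' = c - c') :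
    (supp S u - zstar S c) - (supp S u' - zstar S c') ≤ diam S * ‖c - c'‖ := by
  obtain ⟨m, hm, hmu⟩ := exists_inner_eq_supp hS hne u
  obtain ⟨w, hw, hwc⟩ := exists_inner_eq_supp hS hne (-c)
  have hm' := inner_le_supp hS hm u'
  have hw' := inner_le_supp hS hw (-c')
  have hinner : ⟪u, m⟫ - ⟪u', m⟫ + ⟪-c, w⟫ - ⟪-c', w⟫ = ⟪c - c', m - w⟫ := by
    rw [← inner_sub_left, h]
    simp only [inner_neg_left, inner_sub_left, inner_sub_right]
    ring
  have hdiam : ‖c - c'‖ * ‖m - w‖ ≤ ‖c - c'‖ * diam S := by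
    rw [← dist_eq_norm]
    gcongr
    exact dist_le_diam_of_mem hS.isBounded hm hw
  rw [zstar_eq_neg_supp_neg, zstar_eq_neg_supp_neg]
  linarith [real_inner_le_norm (c - c') (m - w)]

lemma abs_supp_sub_zstar_sub_le_diam (hS : IsCompact S) (hne : S.Nonempty)
    {u u' c c' : EuclideanSpace ℝ (Fin d)} (h : u - u' = c - c') :
    |(supp S u - zstar S c) - (supp S u' - zstar S c')| ≤ diam S * ‖c - c'‖ := by
  have h' : u' - u = c' - c := by rw [← neg_sub, h, neg_sub]
  have := supp_sub_zstar_sub_le_diam hS hne h'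
  rw [norm_sub_rev] at this
  exact abs_sub_le_iff.2 ⟨supp_sub_zstar_sub_le_diam hS hne h, this⟩

end SupportFunction

theorem abs_spoPlus_sub_spoPlus_le {S₁ S₂ : Set (EuclideanSpace ℝ (Fin d))}
    (hS₁ : IsCompact S₁) (hS₂ : IsCompact S₂) (hne₁ : S₁.Nonempty) (hne₂ : S₂.Nonempty)
    (chat c₁ c₂ w₁ w₂ : EuclideanSpace ℝ (Fin d)) {t : ℝ} (hd : hausdorffDist S₁ S₂ ≤ t) :
    |spoPlus S₁ chat c₁ w₁ - spoPlus S₂ chat c₂ w₂| ≤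
      2 * ‖chat‖ * ‖w₁ - w₂‖ +
        min (diam S₁ * ‖c₁ - c₂‖ + t * (‖c₂ - (2 : ℝ) • chat‖ + ‖c₂‖))
          (diam S₂ * ‖c₁ - c₂‖ + t * (‖c₁ - (2 : ℝ) • chat‖ + ‖c₁‖)) := by
  set u₁ := c₁ - (2 : ℝ) • chat
  set u₂ := c₂ - (2 : ℝ) • chat
  have hu : u₁ - u₂ = c₁ - c₂ := sub_sub_sub_cancel_right _ _ _
  have hsplit : spoPlus S₁ chat c₁ w₁ - spoPlus S₂ chat c₂ w₂ =
      2 * ⟪chat, w₁ - w₂⟫ + ((supp S₁ u₁ - zstar S₁ c₁) - (supp S₂ u₂ - zstar S₂ c₂)) := by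
    simp only [spoPlus, inner_sub_right]
    ring
  have hinner : |2 * ⟪chat, w₁ - w₂⟫| ≤ 2 * ‖chat‖ * ‖w₁ - w₂‖ := by
    rw [abs_mul, abs_two, mul_assoc]
    gcongr
    exact abs_real_inner_le_norm _ _
  have hA := (abs_sub_le _ (supp S₁ u₂ - zstar S₁ c₂) _).trans <| add_le_add
    (abs_supp_sub_zstar_sub_le_diam hS₁ hne₁ hu)
    (abs_supp_sub_zstar_sub_le_hausdorffDist hS₁ hS₂ hne₁ hne₂ hd u₂ c₂)
  have hB := (abs_sub_le _ (supp S₂ u₁ - zstar S₂ c₁) _).trans <| add_le_add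
    (abs_supp_sub_zstar_sub_le_hausdorffDist hS₁ hS₂ hne₁ hne₂ hd u₁ c₁)
    (abs_supp_sub_zstar_sub_le_diam hS₂ hne₂ hu)
  rw [hsplit]
  refine (abs_add_le _ _).trans (add_le_add hinner (le_min hA ?_))
  linarith

theorem abs_spoPlus_sub_spoPlus_le_of_stronglyConvex {ρ₁ ρ₂ : ℝ}
    {S₁ S₂ : Set (EuclideanSpace ℝ (Fin d))} (hsc₁ : StronglyConvexSet ρ₁ S₁)
    (hsc₂ : StronglyConvexSet ρ₂ S₂) (hρ₁ : 0 < ρ₁) (hρ₂ : 0 < ρ₂) (hS₁ : IsCompact S₁)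
    (hS₂ : IsCompact S₂) {chat c₁ c₂ w₁ w₂ : EuclideanSpace ℝ (Fin d)} (hc₁ : c₁ ≠ 0)
    (hc₂ : c₂ ≠ 0) (hw₁ : w₁ ∈ S₁) (hmin₁ : IsMinOn (fun x => ⟪c₁, x⟫) S₁ w₁) (hw₂ : w₂ ∈ S₂)
    (hmin₂ : IsMinOn (fun x => ⟪c₂, x⟫) S₂ w₂) {t : ℝ} (hd : hausdorffDist S₁ S₂ ≤ t) :
    |spoPlus S₁ chat c₁ w₁ - spoPlus S₂ chat c₂ w₂| ≤
      2 * ‖chat‖ * (min ρ₁ ρ₂ * ‖‖c₁‖⁻¹ • c₁ - ‖c₂‖⁻¹ • c₂‖ + t + 2 * √(min ρ₁ ρ₂ * t)) +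
        min (diam S₁ * ‖c₁ - c₂‖ + t * (‖c₂ - (2 : ℝ) • chat‖ + ‖c₂‖))
          (diam S₂ * ‖c₁ - c₂‖ + t * (‖c₁ - (2 : ℝ) • chat‖ + ‖c₁‖)) := by
  refine (abs_spoPlus_sub_spoPlus_le hS₁ hS₂ ⟨w₁, hw₁⟩ ⟨w₂, hw₂⟩ chat c₁ c₂ w₁ w₂ hd).trans ?_
  gcongr
  exact norm_sub_le_min_of_isMinOn hsc₁ hsc₂ hρ₁ hρ₂ hS₁ hS₂ hc₁ hc₂ hw₁ hmin₁ hw₂ hmin₂ hd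

section Translation

variable {S : Set (EuclideanSpace ℝ (Fin d))}

lemma IsCompact.setTranslate (hS : IsCompact S) (v : EuclideanSpace ℝ (Fin d)) :
    IsCompact (setTranslate S v) :=
  hS.image (continuous_add_const v)

lemma diam_setTranslate (S : Set (EuclideanSpace ℝ (Fin d))) (v : EuclideanSpace ℝ (Fin d)) :
    diam (setTranslate S v) = diam S :=
  (IsometryEquiv.addRight v).isometry.diam_image S

lemma StronglyConvexSet.setTranslate {ρ : ℝ} (hsc : StronglyConvexSet ρ S)
    (v : EuclideanSpace ℝ (Fin d)) : StronglyConvexSet ρ (setTranslate S v) := by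
  obtain ⟨X, rfl⟩ := hsc
  refine ⟨setTranslate X v, ?_⟩
  rw [setTranslate, setTranslate, biInter_image]
  change IsometryEquiv.addRight v '' _ = _
  rw [image_iInter₂ (IsometryEquiv.addRight v).bijective]
  simp only [IsometryEquiv.image_closedBall]
  rfl

lemma IsMinOn.setTranslate {c w : EuclideanSpace ℝ (Fin d)}
    (h : IsMinOn (fun x => ⟪c, x⟫) S w) (v : EuclideanSpace ℝ (Fin d)) :
    IsMinOn (fun x => ⟪c, x⟫) (setTranslate S v) (w + v) := by
  refine isMinOn_iff.2 ?_
  rintro _ ⟨x, hx, rfl⟩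
  have hwx : ⟪c, w⟫ ≤ ⟪c, x⟫ := h hx
  simpa only [inner_add_right, add_le_add_iff_right] using hwx

lemma supp_setTranslate (hS : IsCompact S) (hne : S.Nonempty) (u v : EuclideanSpace ℝ (Fin d)) :
    supp (setTranslate S v) u = supp S u + ⟪u, v⟫ := by
  obtain ⟨m, hm, hmu⟩ := exists_inner_eq_supp hS hne u
  obtain ⟨_, ⟨m', hm', rfl⟩, hm'u⟩ := exists_inner_eq_supp (hS.setTranslate v) (hne.image _) u
  refine le_antisymm ?_ ?_
  · rw [← hm'u, inner_add_right]
    linarith [inner_le_supp hS hm' u]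
  · rw [← hmu, ← inner_add_right]
    exact inner_le_supp (hS.setTranslate v) ⟨m, hm, rfl⟩ u

lemma zstar_setTranslate (hS : IsCompact S) (hne : S.Nonempty) (c v : EuclideanSpace ℝ (Fin d)) :
    zstar (setTranslate S v) c = zstar S c + ⟪c, v⟫ := by
  rw [zstar_eq_neg_supp_neg, zstar_eq_neg_supp_neg, supp_setTranslate hS hne, inner_neg_left]
  ring

lemma spoPlus_setTranslate (hS : IsCompact S) (hne : S.Nonempty)
    (chat c w v : EuclideanSpace ℝ (Fin d)) :
    spoPlus (setTranslate S v) chat c (w + v) = spoPlus S chat c w := by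
  simp only [spoPlus, supp_setTranslate hS hne, zstar_setTranslate hS hne, inner_add_right,
    inner_sub_left, real_inner_smul_left]
  ring

end Translation

theorem abs_spoPlus_sub_spoPlus_le_of_shapeDist_lt {ρ₁ ρ₂ : ℝ}
    {S₁ S₂ : Set (EuclideanSpace ℝ (Fin d))} (hsc₁ : StronglyConvexSet ρ₁ S₁)
    (hsc₂ : StronglyConvexSet ρ₂ S₂) (hρ₁ : 0 < ρ₁) (hρ₂ : 0 < ρ₂) (hS₁ : IsCompact S₁)
    (hS₂ : IsCompact S₂) {chat c₁ c₂ w₁ w₂ : EuclideanSpace ℝ (Fin d)} (hc₁ : c₁ ≠ 0)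
    (hc₂ : c₂ ≠ 0) (hw₁ : w₁ ∈ S₁) (hmin₁ : IsMinOn (fun x => ⟪c₁, x⟫) S₁ w₁) (hw₂ : w₂ ∈ S₂)
    (hmin₂ : IsMinOn (fun x => ⟪c₂, x⟫) S₂ w₂) {t : ℝ} (ht : shapeDist S₁ S₂ < t) :
    |spoPlus S₁ chat c₁ w₁ - spoPlus S₂ chat c₂ w₂| ≤
      2 * ‖chat‖ * (min ρ₁ ρ₂ * ‖‖c₁‖⁻¹ • c₁ - ‖c₂‖⁻¹ • c₂‖ + t + 2 * √(min ρ₁ ρ₂ * t)) +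
        min (diam S₁ * ‖c₁ - c₂‖ + t * (‖c₂ - (2 : ℝ) • chat‖ + ‖c₂‖))
          (diam S₂ * ‖c₁ - c₂‖ + t * (‖c₁ - (2 : ℝ) • chat‖ + ‖c₁‖)) := by
  obtain ⟨v, hv⟩ := exists_lt_of_ciInf_lt ht
  have h := abs_spoPlus_sub_spoPlus_le_of_stronglyConvex (chat := chat) hsc₁
    (hsc₂.setTranslate v) hρ₁ hρ₂ hS₁ (hS₂.setTranslate v) hc₁ hc₂ hw₁ hmin₁ ⟨w₂, hw₂, rfl⟩
    (hmin₂.setTranslate v) hv.le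
  rwa [spoPlus_setTranslate hS₂ ⟨w₂, hw₂⟩, diam_setTranslate] at h

end

theorem spoPlus_heterogeneity_bound_strongly_convex_general {d : ℕ}
    (Sref Scl : Set (EuclideanSpace ℝ (Fin d)))
    (hcompref : IsCompact Sref) (hcompcl : IsCompact Scl)
    (ρref ρcl : ℝ) (hρref : 0 < ρref) (hρcl : 0 < ρcl)
    (hscref : StronglyConvexSet ρref Sref) (hsccl : StronglyConvexSet ρcl Scl)
    (cref ccl : EuclideanSpace ℝ (Fin d)) (hcref : cref ≠ 0) (hccl : ccl ≠ 0)
    (chat : EuclideanSpace ℝ (Fin d))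
    (wref : EuclideanSpace ℝ (Fin d)) (hwrefmem : wref ∈ Sref)
    (hwrefmin : ∀ w ∈ Sref, ⟪cref, wref⟫ ≤ ⟪cref, w⟫)
    (wcl : EuclideanSpace ℝ (Fin d)) (hwclmem : wcl ∈ Scl)
    (hwclmin : ∀ w ∈ Scl, ⟪ccl, wcl⟫ ≤ ⟪ccl, w⟫) :
    |spoPlus Sref chat cref wref - spoPlus Scl chat ccl wcl| ≤
      2 * ‖chat‖ * (min ρref ρcl * ‖‖cref‖⁻¹ • cref - ‖ccl‖⁻¹ • ccl‖ +
        shapeDist Sref Scl + 2 * Real.sqrt (min ρref ρcl * shapeDist Sref Scl)) +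
      min
        (Metric.diam Sref * ‖cref - ccl‖ +
          shapeDist Sref Scl * (‖ccl - (2 : ℝ) • chat‖ + ‖ccl‖))
        (Metric.diam Scl * ‖cref - ccl‖ +
          shapeDist Sref Scl * (‖cref - (2 : ℝ) • chat‖ + ‖cref‖)) := by
  -- elaborated without the goal, so that `f` is read off the bound for each `t`
  exact (le_of_forall_gt_of_continuousAt (by fun_prop) fun t ht =>
    abs_spoPlus_sub_spoPlus_le_of_shapeDist_lt (chat := chat) hscref hsccl hρref hρcl hcompref
      hcompcl hcref hccl hwrefmem (isMinOn_iff.2 hwrefmin) hwclmem (isMinOn_iff.2 hwclmin) ht :)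

/-- **Strongly convex refinement of the SPO+ discrepancy bound (Corollary 1).** -/
theorem spoPlus_heterogeneity_bound_strongly_convex {d : ℕ}
    (Sref Scl : Set (EuclideanSpace ℝ (Fin d)))
    (hneref : Sref.Nonempty) (hnecl : Scl.Nonempty)
    (hcompref : IsCompact Sref) (hcompcl : IsCompact Scl)
    (ρref ρcl : ℝ) (hρref : 0 < ρref) (hρcl : 0 < ρcl)
    (hscref : StronglyConvexSet ρref Sref) (hsccl : StronglyConvexSet ρcl Scl)
    (cref ccl : EuclideanSpace ℝ (Fin d)) (hcref : cref ≠ 0) (hccl : ccl ≠ 0)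
    (chat : EuclideanSpace ℝ (Fin d))
    (wref : EuclideanSpace ℝ (Fin d)) (hwrefmem : wref ∈ Sref)
    (hwrefmin : ∀ w ∈ Sref, ⟪cref, wref⟫ ≤ ⟪cref, w⟫)
    (wcl : EuclideanSpace ℝ (Fin d)) (hwclmem : wcl ∈ Scl)
    (hwclmin : ∀ w ∈ Scl, ⟪ccl, wcl⟫ ≤ ⟪ccl, w⟫) :
    |spoPlus Sref chat cref wref - spoPlus Scl chat ccl wcl| ≤
      2 * ‖chat‖ * (min ρref ρcl * ‖‖cref‖⁻¹ • cref - ‖ccl‖⁻¹ • ccl‖ +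
        shapeDist Sref Scl + 2 * Real.sqrt (min ρref ρcl * shapeDist Sref Scl)) +
      min
        (Metric.diam Sref * ‖cref - ccl‖ +
          shapeDist Sref Scl * (‖ccl - (2 : ℝ) • chat‖ + ‖ccl‖))
        (Metric.diam Scl * ‖cref - ccl‖ +
          shapeDist Sref Scl * (‖cref - (2 : ℝ) • chat‖ + ‖cref‖)) :=
  spoPlus_heterogeneity_bound_strongly_convex_general Sref Scl hcompref hcompcl ρref ρcl hρref hρcl
    hscref hsccl cref ccl hcref hccl chat wref hwrefmem hwrefmin wcl hwclmem hwclmin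
end
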